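/- Suppose x₁,…,xₙ are linearly independent and the GRW weights satisfy Assumption 1. Then there exists η₀ > 0 such that for every learning rate 0 < η ≤ η₀, the iterate norms diverge: ‖θ^{(t)}‖₂ → ∞ as t → ∞. -/

import Mathlib

/-!
Linear independence gives a unit-margin separator `u` with `yᵢ ⟪xᵢ, u⟫ = 1` for every `i`.
Along `u` a GRW step moves `⟪θ, u⟫` by `-η ∑ᵢ qᵢ φ'(yᵢ ⟪θ, xᵢ⟫)`, which is at least `-η φ'(b) > 0`
while `‖θ‖ ≤ b`, since `φ'` is negative and nondecreasing. So `⟪θ t, u⟫` is nondecreasing, and if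
`‖θ t‖ < b` infinitely often it gains a fixed amount infinitely often, hence tends to infinity,
and then so does `‖θ t‖ ≥ ⟪θ t, u⟫ / ‖u‖`, which is absurd. This works for every `η > 0`.
-/

open scoped RealInnerProductSpace
open Filter

theorem LinearIndependent.exists_inner_eq {ι E : Type*} [Fintype ι] [NormedAddCommGroup E]
    [InnerProductSpace ℝ E] {x : ι → E} (hx : LinearIndependent ℝ x) (y : ι → ℝ) :
    ∃ u : E, ∀ i, ⟪x i, u⟫ = y i := by
  let S : (ι → ℝ) →ₗ[ℝ] E := Fintype.linearCombination ℝ x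
  -- The Gram map `c ↦ (⟪x i, ∑ j, c j • x j⟫)ᵢ` is injective, hence surjective.
  let G : (ι → ℝ) →ₗ[ℝ] ι → ℝ := (LinearMap.pi fun i => (innerSL ℝ (x i)).toLinearMap).comp S
  have hG : Function.Injective G := by
    rw [← LinearMap.ker_eq_bot, LinearMap.ker_eq_bot']
    intro c hc
    have hSc : S c = 0 := by
      have horth : ∀ j, ⟪x j, S c⟫ = 0 := fun j => congrFun hc j
      rw [← inner_self_eq_zero (𝕜 := ℝ)]
      nth_rewrite 1 [show S c = ∑ j, c j • x j from Fintype.linearCombination_apply ℝ x c]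
      simp only [sum_inner, real_inner_smul_left, horth, mul_zero, Finset.sum_const_zero]
    exact funext (Fintype.linearIndependent_iff.mp hx c hSc)
  obtain ⟨c, hc⟩ := LinearMap.injective_iff_surjective.mp hG y
  exact ⟨S c, fun i => congrFun hc i⟩

theorem ConvexOn.lt_zero_of_hasDerivAt_of_strictAnti {φ φ' : ℝ → ℝ} (hconv : ConvexOn ℝ Set.univ φ)
    (hderiv : ∀ a, HasDerivAt φ (φ' a) a) (hanti : StrictAnti φ) (a : ℝ) : φ' a < 0 := by
  have hslope : slope φ a (a + 1) < 0 := by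
    rw [slope_def_field]
    exact div_neg_of_neg_of_pos (by linarith [hanti (lt_add_one a)]) (by linarith)
  exact (hconv.le_slope_of_hasDerivAt trivial trivial (lt_add_one a) (hderiv a)).trans_lt hslope

theorem ConvexOn.monotone_of_hasDerivAt {φ φ' : ℝ → ℝ} (hconv : ConvexOn ℝ Set.univ φ)
    (hderiv : ∀ a, HasDerivAt φ (φ' a) a) : Monotone φ' := by
  have h := hconv.monotoneOn_deriv fun a _ => (hderiv a).differentiableAt
  rw [funext fun a => (hderiv a).deriv] at h
  exact monotoneOn_univ.mp h

theorem tendsto_atTop_of_monotone_of_frequently_add_le {f : ℕ → ℝ} (hf : Monotone f) {ε : ℝ}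
    (hε : 0 < ε) (hjump : ∃ᶠ t in atTop, f t + ε ≤ f (t + 1)) : Tendsto f atTop atTop := by
  refine (tendsto_atTop_of_monotone hf).resolve_right fun ⟨l, hl⟩ => ?_
  have hdiff : Tendsto (fun t => f (t + 1) - f t) atTop (nhds 0) := by
    simpa using (hl.comp (tendsto_add_atTop_nat 1)).sub hl
  obtain ⟨t, ht, hsmall⟩ := (hjump.and_eventually (hdiff.eventually (gt_mem_nhds hε))).exists
  linarith

theorem tendsto_norm_atTop_of_tendsto_inner {α E : Type*} [NormedAddCommGroup E]
    [InnerProductSpace ℝ E] {l : Filter α} [l.NeBot] {θ : α → E} {u : E}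
    (h : Tendsto (fun t => ⟪θ t, u⟫) l atTop) : Tendsto (fun t => ‖θ t‖) l atTop := by
  have hu : 0 < ‖u‖ := by
    refine norm_pos_iff.mpr fun hu0 => ?_
    simp only [hu0, inner_zero_right] at h
    exact not_tendsto_const_atTop 0 l h
  refine tendsto_atTop_mono (fun t => ?_) (h.atTop_div_const hu)
  rw [div_le_iff₀ hu]
  exact real_inner_le_norm _ _

section GRW

variable {ι E : Type*} [Fintype ι] [NormedAddCommGroup E] [InnerProductSpace ℝ E]

theorem inner_sub_smul_sum_of_mul_inner_eq_one {x : ι → E} {y : ι → ℝ} {u : E}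
    (hu : ∀ i, y i * ⟪x i, u⟫ = 1) (θ : E) (η : ℝ) (q g : ι → ℝ) :
    ⟪θ - η • ∑ i, (q i * y i * g i) • x i, u⟫ = ⟪θ, u⟫ - η * ∑ i, q i * g i := by
  rw [inner_sub_left, real_inner_smul_left, sum_inner]
  congr 2
  refine Finset.sum_congr rfl fun i _ => ?_
  rw [real_inner_smul_left]
  linear_combination q i * g i * hu i

theorem sum_mul_le_of_monotone {g : ℝ → ℝ} (hg : Monotone g) {q a : ι → ℝ} {b : ℝ}
    (hq0 : ∀ i, 0 ≤ q i) (hq1 : ∑ i, q i = 1) (hab : ∀ i, a i ≤ b) :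
    ∑ i, q i * g (a i) ≤ g b :=
  calc ∑ i, q i * g (a i) ≤ ∑ i, q i * g b :=
        Finset.sum_le_sum fun i _ => mul_le_mul_of_nonneg_left (hg (hab i)) (hq0 i)
    _ = g b := by rw [← Finset.sum_mul, hq1, one_mul]

theorem mul_inner_le_norm {x : E} {y : ℝ} (hx : ‖x‖ ≤ 1) (hy : y = 1 ∨ y = -1) (θ : E) :
    y * ⟪θ, x⟫ ≤ ‖θ‖ := by
  have hθx : |⟪θ, x⟫| ≤ ‖θ‖ :=
    (abs_real_inner_le_norm θ x).trans (mul_le_of_le_one_right (norm_nonneg θ) hx)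
  rcases hy with rfl | rfl
  · linarith [le_abs_self ⟪θ, x⟫]
  · linarith [neg_abs_le ⟪θ, x⟫]

end GRW

theorem stmt_8_general {d n : ℕ}
    (x : Fin n → EuclideanSpace ℝ (Fin d)) (hx : ∀ i, ‖x i‖ ≤ 1)
    (y : Fin n → ℝ) (hy : ∀ i, y i = 1 ∨ y i = -1)
    (hli : LinearIndependent ℝ x)
    (φ φ' : ℝ → ℝ)
    (hφconv : ConvexOn ℝ Set.univ φ)
    (hφderiv : ∀ a : ℝ, HasDerivAt φ (φ' a) a)
    (hφanti : StrictAnti φ)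
    (q : ℕ → Fin n → ℝ)
    (hq0 : ∀ t i, 0 ≤ q t i)
    (hq1 : ∀ t, ∑ i, q t i = 1) :
    ∃ η₀ > (0 : ℝ), ∀ η : ℝ, 0 < η → η ≤ η₀ →
      ∀ θ : ℕ → EuclideanSpace ℝ (Fin d),
        (∀ t, θ (t + 1) = θ t - η • ∑ i, (q t i * y i * φ' (y i * ⟪θ t, x i⟫)) • x i) →
        Tendsto (fun t => ‖θ t‖) atTop atTop := by
  have hφ'mono := hφconv.monotone_of_hasDerivAt hφderiv
  have hφ'neg := hφconv.lt_zero_of_hasDerivAt_of_strictAnti hφderiv hφanti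
  obtain ⟨u, hu⟩ := hli.exists_inner_eq y
  have hmargin : ∀ i, y i * ⟪x i, u⟫ = 1 := fun i => by
    rcases hy i with h | h <;> simp [hu i, h]
  refine ⟨1, one_pos, fun η hη _ θ hθ => ?_⟩
  have hgain : ∀ t b, ‖θ t‖ ≤ b → ⟪θ t, u⟫ - η * φ' b ≤ ⟪θ (t + 1), u⟫ := fun t b hb => by
    rw [hθ t, inner_sub_smul_sum_of_mul_inner_eq_one hmargin]
    have hsum := sum_mul_le_of_monotone hφ'mono (hq0 t) (hq1 t)
      fun i => (mul_inner_le_norm (hx i) (hy i) (θ t)).trans hb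
    exact sub_le_sub_left (mul_le_mul_of_nonneg_left hsum hη.le) _
  have hmono : Monotone fun t => ⟪θ t, u⟫ := monotone_nat_of_le_succ fun t => by
    nlinarith [hgain t _ le_rfl, hφ'neg ‖θ t‖]
  refine tendsto_atTop.mpr fun b => ?_
  by_contra hb
  have hjump : ∃ᶠ t in atTop, ⟪θ t, u⟫ + -(η * φ' b) ≤ ⟪θ (t + 1), u⟫ :=
    (not_eventually.mp hb).mono fun t ht => by linarith [hgain t b (not_le.mp ht).le]
  have hinner := tendsto_atTop_of_monotone_of_frequently_add_le hmono
    (by nlinarith [hφ'neg b]) hjump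
  exact hb ((tendsto_norm_atTop_of_tendsto_inner hinner).eventually_ge_atTop b)

/-- For a positive, convex, `L`-smooth, strictly decreasing loss
`φ` with `φ(t) → 0` at `+∞`, linearly independent data, and GRW weights
satisfying Assumption 1 with limits `q₁,…,qₙ`, there exists `η₀ > 0` such that
for every `0 < η ≤ η₀`, the iterate norms diverge: `‖θ^{(t)}‖ → ∞`. -/
theorem stmt_8 {d n : ℕ} (hn : 0 < n)
    (x : Fin n → EuclideanSpace ℝ (Fin d)) (hx : ∀ i, ‖x i‖ ≤ 1)
    (y : Fin n → ℝ) (hy : ∀ i, y i = 1 ∨ y i = -1)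
    (hli : LinearIndependent ℝ x)
    (φ φ' : ℝ → ℝ) (L : NNReal)
    (hφpos : ∀ t : ℝ, 0 < φ t)
    (hφconv : ConvexOn ℝ Set.univ φ)
    (hφderiv : ∀ a : ℝ, HasDerivAt φ (φ' a) a)
    (hφlip : LipschitzWith L φ')
    (hφanti : StrictAnti φ)
    (hφlim : Tendsto φ atTop (nhds 0))
    (q : ℕ → Fin n → ℝ)
    (hq0 : ∀ t i, 0 ≤ q t i)
    (hq1 : ∀ t, ∑ i, q t i = 1)
    (qlim : Fin n → ℝ)
    (hqlim : ∀ i, Tendsto (fun t => q t i) atTop (nhds (qlim i)))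
    (hqpos : ∀ i, 0 < qlim i) :
    ∃ η₀ > (0 : ℝ), ∀ η : ℝ, 0 < η → η ≤ η₀ →
      ∀ θ : ℕ → EuclideanSpace ℝ (Fin d),
        (∀ t, θ (t + 1) = θ t - η • ∑ i, (q t i * y i * φ' (y i * ⟪θ t, x i⟫)) • x i) →
        Tendsto (fun t => ‖θ t‖) atTop atTop :=
  stmt_8_general x hx y hy hli φ φ' hφconv hφderiv hφanti q hq0 hq1
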